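/- Let G be a finite group. Then G is purely non-abelian if and only if the following holds: for every group homomorphism p: Ẑ(G) → Z(G), defining the group homomorphism T_p: Hom(G, Ĝ) → Hom(G, Z(G)) by T_p(β)(x) = p(ρ(β(x))), choosing any complete set β₁, …, β_m of coset representatives of ker(T_p) in the abelian group Hom(G, Ĝ), and defining endomorphisms δ_k of G by δ_k(x) = x·p(ρ(β_k(x))) for 1 ≤ k ≤ m, one has Hom(G, Ĝ) = ⋃_{k=1}^{m} { β ∘ δ_k : β ∈ β_k · ker(T_p) }, where β ∘ δ_k denotes the bicharacter x ↦ β(δ_k(x)). -/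

import Mathlib

/-!
Write `T_p β = p ∘ ρ ∘ β` (`bicharacterToCenter`), `δ_f x = x · f x` for `f : G → Z(G)`
(`centralTwist`) and `Φ f = f ∘ δ_f` (`compCentralTwist`). Since `T_p (b ∘ δ) = T_p b ∘ δ`, the
covering property forces `T_p c = Φ (T_p β_k)` for every `c`, so `Φ` maps the finite set
`im T_p` onto itself.

If `G` is purely non-abelian, every endomorphism `s` of `G` with central image is nilpotent: an
idempotent power of `s` splits `G` as its (central) image times its kernel. Applied to
`x ↦ f(x)⁻¹` this shows that every `δ_f` is injective (Adney–Yen), and that `Φ` is injective,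
because `f / g` intertwines `δ_g` with `x ↦ f(x)⁻¹` when `Φ f = Φ g`. Hence `Φ` permutes `im T_p`,
and `c = (c ∘ δ_k⁻¹) ∘ δ_k` is the required decomposition.

Conversely, a nontrivial abelian direct factor `A` is central and has a retraction `π : G → A`;
a duality `Â ≅ A` produces `p` and `c` with `T_p c = π⁻¹ ≠ 1`, while `Φ (π⁻¹) = 1 = Φ 1`.
So `Φ` is not injective on `im T_p`, hence not onto it, and the covering fails for a complete set
of representatives.
-/

/-- A finite group `G` is purely non-abelian if it has no nontrivial abelian direct
factor: whenever `G` is the internal direct product of two normal subgroups `A` and `B`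
with `A` abelian, `A` is trivial. -/
def PurelyNonAbelian (G : Type*) [Group G] : Prop :=
  ∀ A B : Subgroup G, A.Normal → B.Normal → IsCompl A B →
    (∀ a b : A, a * b = b * a) → A = ⊥

open Subgroup (center mem_center_iff mem_top)

instance MonoidHom.finite {M N : Type*} [MulOneClass M] [MulOneClass N] [Finite M] [Finite N] :
    Finite (M →* N) :=
  Finite.of_injective _ DFunLike.coe_injective

theorem exists_isIdempotentElem_pow {M : Type*} [Monoid M] [Finite M] (a : M) :
    ∃ n ≠ 0, IsIdempotentElem (a ^ n) := by
  obtain ⟨m, n, hmn, h⟩ := Set.finite_univ.exists_lt_map_eq_of_forall_mem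
    (f := fun n : ℕ => a ^ n) fun _ => Set.mem_univ _
  obtain ⟨d, hd, rfl⟩ : ∃ d, d ≠ 0 ∧ n = m + d := ⟨n - m, by omega, by omega⟩
  have periodic (k : ℕ) : a ^ (m + k * d) = a ^ m := by
    induction k with
    | zero => simp
    | succ k ih => rw [add_mul, one_mul, ← add_assoc, pow_add, ih, ← pow_add, ← h]
  have hm : m ≤ (m + 1) * d := by nlinarith [Nat.one_le_iff_ne_zero.mpr hd]
  refine ⟨(m + 1) * d, by positivity, ?_⟩
  obtain ⟨i, hi⟩ := Nat.exists_eq_add_of_le hm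
  rw [IsIdempotentElem, ← pow_add, hi, add_right_comm, ← hi, pow_add, periodic, ← pow_add, ← hi]

theorem exists_fin_transversal {α γ : Type*} (T : α → γ) [Finite (Set.range T)] :
    ∃ (m : ℕ) (r : Fin m → α), ∀ a, ∃! k, T (r k) = T a := by
  let e := Finite.equivFin (Set.range T)
  refine ⟨_, fun k => Set.rangeSplitting T (e.symm k),
    fun a => ⟨e ⟨T a, Set.mem_range_self a⟩, ?_, fun k hk => ?_⟩⟩
  · simp only [Set.apply_rangeSplitting, e.symm_apply_apply]
  · rw [← e.symm_apply_eq]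
    exact Subtype.ext (by simpa only [Set.apply_rangeSplitting] using hk)

section
variable {G : Type*} [Group G]

def centralTwist (f : G →* center G) : G →* G where
  toFun x := x * f x
  map_one' := by simp
  map_mul' x y := by
    rw [map_mul, Subgroup.coe_mul, mul_assoc x, ← mul_assoc y, mem_center_iff.mp (f x).2 y]
    simp only [mul_assoc]

@[simp]
theorem centralTwist_apply (f : G →* center G) (x : G) : centralTwist f x = x * f x := rfl

def compCentralTwist (f : G →* center G) : G →* center G := f.comp (centralTwist f)

@[simp]
theorem compCentralTwist_apply (f : G →* center G) (x : G) :
    compCentralTwist f x = f x * f (f x) := by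
  simp [compCentralTwist]

def bicharacterToCenter (p : (center G →* ℂˣ) →* center G) (β : G →* (G →* ℂˣ)) :
    G →* center G :=
  (p.comp (MonoidHom.compHom' (center G).subtype)).comp β

theorem bicharacterToCenter_apply (p : (center G →* ℂˣ) →* center G) (β : G →* (G →* ℂˣ))
    (x : G) : bicharacterToCenter p β x = p ((β x).comp (center G).subtype) := rfl

theorem bicharacterToCenter_one (p : (center G →* ℂˣ) →* center G) :
    bicharacterToCenter p 1 = 1 :=
  MonoidHom.comp_one _

theorem bicharacterToCenter_comp (p : (center G →* ℂˣ) →* center G) (β : G →* (G →* ℂˣ))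
    (δ : G →* G) : bicharacterToCenter p (β.comp δ) = (bicharacterToCenter p β).comp δ := rfl

theorem mapsTo_compCentralTwist (p : (center G →* ℂˣ) →* center G) :
    Set.MapsTo compCentralTwist (Set.range (bicharacterToCenter p))
      (Set.range (bicharacterToCenter p)) := by
  rintro _ ⟨β, rfl⟩
  exact ⟨β.comp (centralTwist (bicharacterToCenter p β)), rfl⟩

namespace PurelyNonAbelian

theorem eq_one_of_comp_self (hG : PurelyNonAbelian G) {π : G →* G} (hπ : π.comp π = π)
    (hZ : ∀ x, π x ∈ center G) : π = 1 := by
  have hfix (x : G) : π (π x) = π x := DFunLike.congr_fun hπ x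
  have hcompl : IsCompl π.range π.ker := by
    constructor
    · rw [Subgroup.disjoint_def]
      rintro _ ⟨y, rfl⟩ hy
      rwa [← hfix]
    · rw [codisjoint_iff, eq_top_iff]
      intro g _
      rw [← mul_inv_cancel_left (π g) g]
      exact Subgroup.mul_mem_sup ⟨g, rfl⟩ (by simp [hfix])
  have hnormal : π.range.Normal :=
    ⟨by rintro _ ⟨y, rfl⟩ g; rw [mem_center_iff.mp (hZ y) g, mul_inv_cancel_right]; exact ⟨y, rfl⟩⟩
  have hcomm (a b : π.range) : a * b = b * a := by
    obtain ⟨_, y, rfl⟩ := b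
    exact Subtype.ext (mem_center_iff.mp (hZ y) a)
  exact MonoidHom.range_eq_bot_iff.mp (hG _ _ hnormal π.normal_ker hcompl hcomm)

theorem exists_iterate_eq_one [Finite G] (hG : PurelyNonAbelian G) (s : G →* G)
    (hZ : ∀ x, s x ∈ center G) : ∃ n, ∀ x, s^[n] x = 1 := by
  let e : Monoid.End G := s
  have : Finite (Monoid.End G) := inferInstanceAs (Finite (G →* G))
  obtain ⟨n, hn, hidem⟩ := exists_isIdempotentElem_pow e
  have hcentral (x : G) : (e ^ n) x ∈ center G := by
    obtain ⟨k, rfl⟩ := Nat.exists_eq_succ_of_ne_zero hn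
    rw [Monoid.End.coe_pow, Function.iterate_succ_apply']
    exact hZ _
  refine ⟨n, fun x => ?_⟩
  change (⇑e)^[n] x = 1
  rw [← Monoid.End.coe_pow, hG.eq_one_of_comp_self hidem hcentral]
  rfl

open IsMulCommutative in
theorem centralTwist_bijective [Finite G] (hG : PurelyNonAbelian G) (f : G →* center G) :
    Function.Bijective (centralTwist f) := by
  refine Finite.injective_iff_bijective.mp ((injective_iff_map_eq_one _).mpr fun x hx => ?_)
  obtain ⟨n, hn⟩ :=
    hG.exists_iterate_eq_one ((center G).subtype.comp f⁻¹) fun _ => SetLike.coe_mem _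
  have hfix : (center G).subtype.comp f⁻¹ x = x := (eq_inv_of_mul_eq_one_left hx).symm
  rw [← hn x, Function.iterate_fixed hfix]

open IsMulCommutative in
theorem compCentralTwist_injective [Finite G] (hG : PurelyNonAbelian G) :
    Function.Injective (compCentralTwist : (G →* center G) → G →* center G) := by
  intro f g hfg
  let s : G →* G := (center G).subtype.comp f⁻¹
  obtain ⟨n, hn⟩ := hG.exists_iterate_eq_one s fun _ => SetLike.coe_mem _
  have hsemiconj : Function.Semiconj (fun x => ((f * g⁻¹) x : G)) (centralTwist g) s := by
    intro x
    have h : f x * f (f x) = g x * g (g x) := by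
      simpa only [compCentralTwist_apply] using DFunLike.congr_fun hfg x
    have key : (f * g⁻¹) (centralTwist g x) = (f ((f * g⁻¹) x))⁻¹ := by
      simp only [MonoidHom.mul_apply, MonoidHom.inv_apply, centralTwist_apply, map_mul, map_inv,
        Subgroup.coe_mul, Subgroup.coe_inv]
      rw [eq_inv_mul_of_mul_eq h]
      simp [mul_comm, mul_assoc, mul_left_comm]
    exact congrArg Subtype.val key
  ext x
  obtain ⟨y, rfl⟩ := ((hG.centralTwist_bijective g).iterate n).surjective x
  have h := (hsemiconj.iterate_right n y).trans (hn _)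
  simpa [mul_inv_eq_one] using h

end PurelyNonAbelian

section Cover

variable {ι : Type*} (p : (center G →* ℂˣ) →* center G) (β : ι → G →* (G →* ℂˣ))

/-- `Hom(G, Ĝ) = ⋃ₖ {b ∘ δ_k : b ∈ β_k · ker T_p}`, with `δ_k = centralTwist (T_p β_k)`. -/
def IsBicharacterCover : Prop :=
  ∀ c : G →* (G →* ℂˣ), ∃ k b, bicharacterToCenter p b = bicharacterToCenter p (β k) ∧
    c = b.comp (centralTwist (bicharacterToCenter p (β k)))

theorem isBicharacterCover_of_injOn [Finite G]
    (hδ : ∀ f : G →* center G, Function.Bijective (centralTwist f))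
    (hΦ : Set.InjOn compCentralTwist (Set.range (bicharacterToCenter p)))
    (hβ : ∀ b, ∃ k, bicharacterToCenter p (β k) = bicharacterToCenter p b) :
    IsBicharacterCover p β := by
  intro c
  have hbij := ((Set.toFinite _).injOn_iff_bijOn_of_mapsTo (mapsTo_compCentralTwist p)).mp hΦ
  obtain ⟨_, ⟨b', rfl⟩, hb'⟩ := hbij.surjOn ⟨c, rfl⟩
  obtain ⟨k, hk⟩ := hβ b'
  rw [← hk] at hb'
  let δ := MulEquiv.ofBijective _ (hδ (bicharacterToCenter p (β k)))
  refine ⟨k, c.comp δ.symm.toMonoidHom, ?_, ?_⟩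
  · ext1 x
    rw [bicharacterToCenter_comp, ← hb']
    exact congrArg (bicharacterToCenter p (β k)) (δ.apply_symm_apply x)
  · ext1 x
    exact congrArg c (δ.symm_apply_apply x).symm

theorem IsBicharacterCover.injOn [Finite G] (h : IsBicharacterCover p β) :
    Set.InjOn compCentralTwist (Set.range (bicharacterToCenter p)) := by
  refine ((Set.toFinite _).surjOn_iff_bijOn_of_mapsTo (mapsTo_compCentralTwist p)).mp ?_ |>.injOn
  rintro _ ⟨c, rfl⟩
  obtain ⟨k, b, hb, rfl⟩ := h c
  exact ⟨_, ⟨β k, rfl⟩, by rw [bicharacterToCenter_comp, hb]; rfl⟩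

end Cover

theorem Subgroup.le_center_of_isCompl {A B : Subgroup G} [A.Normal] [B.Normal] (h : IsCompl A B)
    (hcomm : ∀ a b : A, a * b = b * a) : A ≤ center G := by
  intro a ha
  have hle : A ⊔ B ≤ Subgroup.centralizer {a} := by
    refine sup_le (fun x hx => ?_) (fun y hy => ?_) <;>
      rw [Subgroup.mem_centralizer_singleton_iff]
    · exact congrArg Subtype.val (hcomm ⟨x, hx⟩ ⟨a, ha⟩)
    · exact (Subgroup.commute_of_normal_of_disjoint A B ‹_› ‹_› h.disjoint a y ha hy).eq.symm
  rw [h.sup_eq_top] at hle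
  exact mem_center_iff.mpr fun g => Subgroup.mem_centralizer_singleton_iff.mp (hle (mem_top g))

theorem Subgroup.exists_retraction_of_isCompl {A B : Subgroup G} [B.Normal] (h : IsCompl A B) :
    ∃ π : G →* A, ∀ a : A, π a = a := by
  have hc : A.IsComplement' B := Subgroup.isComplement'_of_disjoint_and_mul_eq_univ h.disjoint
    (by rw [← Subgroup.mul_normal, h.sup_eq_top, Subgroup.coe_top])
  exact ⟨hc.QuotientMulEquiv.toMonoidHom.comp (QuotientGroup.mk' B),
    fun a => hc.QuotientMulEquiv.eq_symm_apply.mp rfl⟩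

theorem exists_bicharacterToCenter_eq_inv {A : Type*} [CommGroup A] [Finite A]
    (ι : A →* center G) (π : G →* A) (hπ : ∀ a, π (ι a) = a) :
    ∃ p c, ∀ x, bicharacterToCenter p c x = (ι (π x))⁻¹ := by
  obtain ⟨ψ⟩ := CommGroup.monoidHom_mulEquiv_of_hasEnoughRootsOfUnity A ℂ
  refine ⟨ι.comp (ψ.toMonoidHom.comp (MonoidHom.compHom' ι))⁻¹,
    (MonoidHom.compHom' π).comp (ψ.symm.toMonoidHom.comp π), fun x => ?_⟩
  have hres : MonoidHom.compHom' ι ((MonoidHom.compHom' π (ψ.symm (π x))).comp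
      (center G).subtype) = ψ.symm (π x) := by
    ext a
    simp [hπ]
  simp [bicharacterToCenter_apply, hres]

theorem exists_bicharacterToCenter_ne_one_of_not_purelyNonAbelian [Finite G]
    (hG : ¬ PurelyNonAbelian G) :
    ∃ (p : (center G →* ℂˣ) →* center G) (c : G →* (G →* ℂˣ)), bicharacterToCenter p c ≠ 1 ∧
      compCentralTwist (bicharacterToCenter p c) = 1 := by
  simp only [PurelyNonAbelian, not_forall] at hG
  obtain ⟨A, B, _, _, hAB, hcomm, hA⟩ := hG
  obtain ⟨π, hπ⟩ := Subgroup.exists_retraction_of_isCompl hAB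
  let ι := Subgroup.inclusion (Subgroup.le_center_of_isCompl hAB hcomm)
  let : CommGroup A := { (inferInstance : Group A) with mul_comm := hcomm }
  obtain ⟨p, c, hc⟩ := exists_bicharacterToCenter_eq_inv ι π hπ
  refine ⟨p, c, fun h => hA ?_, ?_⟩
  · rw [Subgroup.eq_bot_iff_forall]
    intro a ha
    have := DFunLike.congr_fun h a
    rw [hc, MonoidHom.one_apply, inv_eq_one, hπ ⟨a, ha⟩] at this
    exact congrArg Subtype.val this
  · ext1 x
    simp [hc, ι, hπ]

end

/-- `G` is purely non-abelian iff for every homomorphism `p : Ẑ(G) → Z(G)`, with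
`T_p : Hom(G, Ĝ) → Hom(G, Z(G))`, `T_p(β)(x) = p(ρ(β x))`, and any complete set
`β 0, …, β (m-1)` of coset representatives of `ker T_p` in `Hom(G, Ĝ)`, setting
`δ k (x) = x · p(ρ(β k x))`, every bicharacter of `G` is of the form `b ∘ δ k` for
some `k` and some `b ∈ (β k) · ker T_p`. -/
theorem purelyNonAbelian_iff_bicharacter_cover (G : Type*) [Group G] [Finite G] :
    PurelyNonAbelian G ↔
      ∀ (p : (Subgroup.center G →* ℂˣ) →* Subgroup.center G)
        (m : ℕ) (β : Fin m → (G →* (G →* ℂˣ))),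
        (∀ b : G →* (G →* ℂˣ), ∃! k : Fin m, ∀ x : G,
            p ((β k x).comp (Subgroup.center G).subtype)
              = p ((b x).comp (Subgroup.center G).subtype)) →
        ∀ c : G →* (G →* ℂˣ), ∃ k : Fin m, ∃ b : G →* (G →* ℂˣ),
          (∀ x : G, p ((b x).comp (Subgroup.center G).subtype)
              = p ((β k x).comp (Subgroup.center G).subtype)) ∧
          ∀ x : G, c x = b (x * (p ((β k x).comp (Subgroup.center G).subtype) : G)) := by
  constructor
  · intro hG p m β hβ c
    have hreps (b : G →* (G →* ℂˣ)) :
        ∃ k, bicharacterToCenter p (β k) = bicharacterToCenter p b :=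
      (hβ b).exists.imp fun _ hk => MonoidHom.ext hk
    obtain ⟨k, b, hb, rfl⟩ := isBicharacterCover_of_injOn p β hG.centralTwist_bijective
      hG.compCentralTwist_injective.injOn hreps c
    exact ⟨k, b, DFunLike.congr_fun hb, fun _ => rfl⟩
  · intro hcover
    by_contra hG
    obtain ⟨p, c, hne, hc⟩ := exists_bicharacterToCenter_ne_one_of_not_purelyNonAbelian hG
    obtain ⟨m, β, hβ⟩ := exists_fin_transversal (bicharacterToCenter p)
    have hinj : Set.InjOn compCentralTwist (Set.range (bicharacterToCenter p)) := by
      refine IsBicharacterCover.injOn p β fun c => ?_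
      obtain ⟨k, b, hb, hcb⟩ := hcover p m β (fun b => by
        simpa only [DFunLike.ext_iff, bicharacterToCenter_apply] using hβ b) c
      exact ⟨k, b, MonoidHom.ext hb, MonoidHom.ext hcb⟩
    refine hne ((hinj ⟨c, rfl⟩ ⟨1, rfl⟩ ?_).trans (bicharacterToCenter_one p))
    rw [hc, bicharacterToCenter_one]
    rfl
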